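/- For every p > 0 there exists ε > 0 such that for all α with π/12 - ε < α < π/12, the value 4·(sec α/2)^p + 2·(√2/(1 - tan α))^p is strictly less than 6·(2/(√6 - √2))^p. Consequently the configuration S_{π/12} is not a minimizer of the Riesz p-energy among four-point configurations on the torus for any p > 0. -/

import Mathlib

/-- Toroidal (geodesic) distance on the flat torus `T² = [0,1)²`. -/
noncomputable def torusDist (x y : ℝ × ℝ) : ℝ :=
  sInf {r : ℝ | ∃ a b : ℤ,
    r = Real.sqrt ((x.1 - y.1 + a) ^ 2 + (x.2 - y.2 + b) ^ 2)}

/-- Riesz `p`-energy over unordered pairs of a four-point configuration. -/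
noncomputable def rieszEnergy4 (p : ℝ) (x : Fin 4 → ℝ × ℝ) : ℝ :=
  ∑ q ∈ Finset.univ.offDiag.filter (fun q : Fin 4 × Fin 4 => q.1 < q.2),
    1 / torusDist (x q.1) (x q.2) ^ p

/-- The configuration `S_{π/12}` (with `tan (π/12) = 2 - √3`). -/
noncomputable def Send : Fin 4 → ℝ × ℝ :=
  ![(0, 0), ((2 - Real.sqrt 3) / 2, 1/2), (1/2, (2 - Real.sqrt 3) / 2),
    ((3 - Real.sqrt 3) / 2, (3 - Real.sqrt 3) / 2)]

/-- The energy of the family `S_α`: `E(α) = 4·(2/sec α)^p + 2·(√2/(1 - tan α))^p`. -/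
noncomputable def Efam (p : ℝ) (α : ℝ) : ℝ :=
  4 * (2 / (Real.cos α)⁻¹) ^ p + 2 * (Real.sqrt 2 / (1 - Real.tan α)) ^ p


lemma sqrt6_eq : Real.sqrt 6 = Real.sqrt 2 * Real.sqrt 3 := by
  rw [← Real.sqrt_mul (by norm_num)]; norm_num

lemma cos_pi_div_twelve : Real.cos (Real.pi/12) = (Real.sqrt 6 + Real.sqrt 2) / 4 := by
  have h : Real.pi/12 = Real.pi/3 - Real.pi/4 := by ring
  rw [h, Real.cos_sub, Real.cos_pi_div_three, Real.sin_pi_div_three,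
    Real.cos_pi_div_four, Real.sin_pi_div_four, sqrt6_eq]
  ring

lemma sin_pi_div_twelve : Real.sin (Real.pi/12) = (Real.sqrt 6 - Real.sqrt 2) / 4 := by
  have h : Real.pi/12 = Real.pi/3 - Real.pi/4 := by ring
  rw [h, Real.sin_sub, Real.cos_pi_div_three, Real.sin_pi_div_three,
    Real.cos_pi_div_four, Real.sin_pi_div_four, sqrt6_eq]
  ring

lemma tan_pi_div_twelve : Real.tan (Real.pi/12) = 2 - Real.sqrt 3 := by
  have h2 : Real.sqrt 2 ^ 2 = 2 := Real.sq_sqrt (by norm_num)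
  have h3 : Real.sqrt 3 ^ 2 = 3 := Real.sq_sqrt (by norm_num)
  have h3' : (0:ℝ) < Real.sqrt 3 := Real.sqrt_pos.2 (by norm_num)
  have h2' : (0:ℝ) < Real.sqrt 2 := Real.sqrt_pos.2 (by norm_num)
  rw [Real.tan_eq_sin_div_cos, sin_pi_div_twelve, cos_pi_div_twelve, sqrt6_eq]
  rw [div_eq_iff (by positivity)]
  ring_nf
  nlinarith [h2, h3, sq_nonneg (Real.sqrt 2 * Real.sqrt 3)]

open Filter Topology in
lemma left_lt_of_deriv_pos {f : ℝ → ℝ} {a D : ℝ} (hf : HasDerivAt f D a) (hD : 0 < D) :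
    ∃ ε > 0, ∀ x, a - ε < x → x < a → f x < f a := by
  have h := hasDerivAt_iff_tendsto_slope.1 hf
  have h2 : ∀ᶠ x in 𝓝[≠] a, 0 < slope f a x := h.eventually_const_lt hD
  have h3 : ∀ᶠ x in 𝓝[<] a, 0 < slope f a x := h2.filter_mono (nhdsLT_le_nhdsNE a)
  rw [eventually_iff, mem_nhdsLT_iff_exists_Ioo_subset] at h3
  obtain ⟨l, hl, hsub⟩ := h3
  refine ⟨a - l, by simp [Set.mem_Iio] at hl; linarith [hl], fun x hx1 hx2 => ?_⟩
  have hx : x ∈ Set.Ioo l a := ⟨by linarith, hx2⟩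
  have := hsub hx
  simp only [Set.mem_setOf_eq, slope_def_field] at this
  have hxa : x - a < 0 := by linarith
  rw [div_pos_iff] at this
  rcases this with ⟨h1, h2⟩ | ⟨h1, h2⟩
  · linarith
  · linarith

set_option maxHeartbeats 1000000 in
lemma part1 (p : ℝ) (hp : 0 < p) :
    ∃ ε > 0, ∀ α : ℝ, Real.pi / 12 - ε < α → α < Real.pi / 12 →
      Efam p α < 6 * (2 / (Real.sqrt 6 - Real.sqrt 2)) ^ p := by
  have h2 : Real.sqrt 2 ^ 2 = 2 := Real.sq_sqrt (by norm_num)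
  have h3 : Real.sqrt 3 ^ 2 = 3 := Real.sq_sqrt (by norm_num)
  have h2' : (0:ℝ) < Real.sqrt 2 := Real.sqrt_pos.2 (by norm_num)
  have h3' : (0:ℝ) < Real.sqrt 3 := Real.sqrt_pos.2 (by norm_num)
  have h3lt : Real.sqrt 3 < 2 := by nlinarith
  set a := Real.pi / 12 with ha
  have hcosa : Real.cos a = (Real.sqrt 6 + Real.sqrt 2) / 4 := cos_pi_div_twelve
  have hsina : Real.sin a = (Real.sqrt 6 - Real.sqrt 2) / 4 := sin_pi_div_twelve
  have htana : Real.tan a = 2 - Real.sqrt 3 := tan_pi_div_twelve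
  have hcpos : 0 < Real.cos a := by rw [hcosa, sqrt6_eq]; positivity
  have htlt : 1 - Real.tan a > 0 := by rw [htana]; nlinarith
  have hbase : Real.sqrt 2 / (1 - Real.tan a) = 2 * Real.cos a := by
    have hne : (1:ℝ) - (2 - Real.sqrt 3) ≠ 0 := by nlinarith
    rw [htana, hcosa, sqrt6_eq, div_eq_iff hne]
    nlinarith [sq_nonneg (Real.sqrt 2 * Real.sqrt 3)]
  -- derivative
  have d1 : HasDerivAt (fun α => 2 * Real.cos α) (2 * -Real.sin a) a :=
    (Real.hasDerivAt_cos a).const_mul 2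
  have D1 : HasDerivAt (fun α => (2 * Real.cos α) ^ p)
      ((2 * -Real.sin a) * p * (2 * Real.cos a) ^ (p - 1)) a :=
    d1.rpow_const (Or.inl (mul_pos two_pos hcpos).ne')
  have ht : HasDerivAt Real.tan (1 / Real.cos a ^ 2) a := Real.hasDerivAt_tan hcpos.ne'
  have d2 : HasDerivAt (fun α => 1 - Real.tan α) (-(1 / Real.cos a ^ 2)) a := ht.const_sub 1
  have d3 : HasDerivAt (fun α => Real.sqrt 2 / (1 - Real.tan α))
      ((0 * (1 - Real.tan a) - Real.sqrt 2 * -(1 / Real.cos a ^ 2)) / (1 - Real.tan a) ^ 2) a :=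
    (hasDerivAt_const a (Real.sqrt 2)).div d2 htlt.ne'
  have D2 : HasDerivAt (fun α => (Real.sqrt 2 / (1 - Real.tan α)) ^ p)
      (((0 * (1 - Real.tan a) - Real.sqrt 2 * -(1 / Real.cos a ^ 2)) / (1 - Real.tan a) ^ 2)
        * p * (Real.sqrt 2 / (1 - Real.tan a)) ^ (p - 1)) a :=
    d3.rpow_const (Or.inl (div_pos h2' htlt).ne')
  have Df : HasDerivAt (fun α => 4 * (2 * Real.cos α) ^ p + 2 * (Real.sqrt 2 / (1 - Real.tan α)) ^ p)
      (4 * ((2 * -Real.sin a) * p * (2 * Real.cos a) ^ (p - 1)) +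
       2 * (((0 * (1 - Real.tan a) - Real.sqrt 2 * -(1 / Real.cos a ^ 2)) / (1 - Real.tan a) ^ 2)
        * p * (Real.sqrt 2 / (1 - Real.tan a)) ^ (p - 1))) a :=
    (D1.const_mul 4).add (D2.const_mul 2)
  have hDpos : 0 < 4 * ((2 * -Real.sin a) * p * (2 * Real.cos a) ^ (p - 1)) +
       2 * (((0 * (1 - Real.tan a) - Real.sqrt 2 * -(1 / Real.cos a ^ 2)) / (1 - Real.tan a) ^ 2)
        * p * (Real.sqrt 2 / (1 - Real.tan a)) ^ (p - 1)) := by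
    rw [hbase]
    have hX : 0 < (2 * Real.cos a) ^ (p - 1) := Real.rpow_pos_of_pos (by positivity) _
    have key : 4 * (2 * -Real.sin a) +
        2 * ((0 * (1 - Real.tan a) - Real.sqrt 2 * -(1 / Real.cos a ^ 2)) / (1 - Real.tan a) ^ 2)
        = 6 * Real.sqrt 2 - 2 * Real.sqrt 6 := by
      rw [hsina, htana, hcosa, sqrt6_eq]
      have hc2 : ((Real.sqrt 2 * Real.sqrt 3 + Real.sqrt 2) / 4) ^ 2 = (2 + Real.sqrt 3) / 4 := by
        nlinarith [sq_nonneg (Real.sqrt 2 * Real.sqrt 3)]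
      rw [hc2]
      have hne1 : (2 + Real.sqrt 3) / 4 ≠ 0 := by positivity
      have hne2 : 1 - (2 - Real.sqrt 3) ≠ 0 := by nlinarith
      field_simp
      nlinarith [sq_nonneg (Real.sqrt 2 * Real.sqrt 3), sq_nonneg (Real.sqrt 2 + Real.sqrt 3)]
    have hK : 0 < 6 * Real.sqrt 2 - 2 * Real.sqrt 6 := by rw [sqrt6_eq]; nlinarith
    calc (0:ℝ) < (6 * Real.sqrt 2 - 2 * Real.sqrt 6) * p * (2 * Real.cos a) ^ (p - 1) := by positivity
    _ = _ := by rw [← key]; ring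
  obtain ⟨ε, hε, hlt⟩ := left_lt_of_deriv_pos Df hDpos
  refine ⟨ε, hε, fun α h1 h2n => ?_⟩
  have := hlt α h1 h2n
  have hEf : ∀ β : ℝ, Efam p β = 4 * (2 * Real.cos β) ^ p + 2 * (Real.sqrt 2 / (1 - Real.tan β)) ^ p := by
    intro β; simp [Efam, div_eq_mul_inv, inv_inv]
  rw [hEf]
  have hend : 4 * (2 * Real.cos a) ^ p + 2 * (Real.sqrt 2 / (1 - Real.tan a)) ^ p
      = 6 * (2 / (Real.sqrt 6 - Real.sqrt 2)) ^ p := by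
    rw [hbase]
    have : (2:ℝ) / (Real.sqrt 6 - Real.sqrt 2) = 2 * Real.cos a := by
      have hne : Real.sqrt 2 * Real.sqrt 3 - Real.sqrt 2 ≠ 0 := by nlinarith
      rw [hcosa, sqrt6_eq, div_eq_iff hne]
      nlinarith [sq_nonneg (Real.sqrt 2 * Real.sqrt 3)]
    rw [this]; ring
  rw [← hend]
  exact this


lemma rieszEnergy4_eq (p : ℝ) (x : Fin 4 → ℝ × ℝ) :
    rieszEnergy4 p x =
      1 / torusDist (x 0) (x 1) ^ p + 1 / torusDist (x 0) (x 2) ^ p +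
      1 / torusDist (x 0) (x 3) ^ p + 1 / torusDist (x 1) (x 2) ^ p +
      1 / torusDist (x 1) (x 3) ^ p + 1 / torusDist (x 2) (x 3) ^ p := by
  rw [rieszEnergy4, show (Finset.univ.offDiag.filter (fun q : Fin 4 × Fin 4 => q.1 < q.2)) =
    {((0:Fin 4),(1:Fin 4)), (0,2), (0,3), (1,2), (1,3), (2,3)} from by decide]
  rw [Finset.sum_insert (by decide), Finset.sum_insert (by decide),
    Finset.sum_insert (by decide), Finset.sum_insert (by decide),
    Finset.sum_insert (by decide), Finset.sum_singleton]
  ring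

lemma torusDist_le (x y : ℝ × ℝ) (a b : ℤ) :
    torusDist x y ≤ Real.sqrt ((x.1 - y.1 + a) ^ 2 + (x.2 - y.2 + b) ^ 2) :=
  csInf_le ⟨0, fun r ⟨a', b', hr⟩ => hr ▸ Real.sqrt_nonneg _⟩ ⟨a, b, rfl⟩

lemma le_torusDist {x y : ℝ × ℝ} {c : ℝ} (hc : 0 ≤ c)
    (h : ∀ a b : ℤ, c ^ 2 ≤ (x.1 - y.1 + a) ^ 2 + (x.2 - y.2 + b) ^ 2) :
    c ≤ torusDist x y :=
  le_csInf ⟨_, 0, 0, rfl⟩ (fun r ⟨a, b, hr⟩ => hr ▸ (Real.le_sqrt hc (by positivity)).2 (h a b))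

lemma int_shift {u : ℝ} (hu0 : 0 ≤ u) (hu1 : u ≤ 1) (a : ℤ) {m : ℝ}
    (hm1 : m ≤ u ^ 2) (hm2 : m ≤ (1 - u) ^ 2) : m ≤ (u + a) ^ 2 := by
  rcases le_or_gt 0 a with h | h
  · have ha : (0:ℝ) ≤ (a:ℝ) := by exact_mod_cast h
    nlinarith
  · have h' : a ≤ -1 := by omega
    have ha : (a:ℝ) ≤ -1 := by exact_mod_cast h'
    nlinarith

lemma int_shift' {u : ℝ} (hu0 : 0 ≤ u) (hu1 : u ≤ 1) (a : ℤ) {m : ℝ}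
    (hm1 : m ≤ u ^ 2) (hm2 : m ≤ (1 - u) ^ 2) : m ≤ (-u + a) ^ 2 := by
  have h := int_shift hu0 hu1 (-a) hm1 hm2
  have e : (-u + (a:ℝ)) ^ 2 = (u + ((-a : ℤ) : ℝ)) ^ 2 := by push_cast; ring
  rw [e]; exact h

lemma le_torusDist_of {x y : ℝ × ℝ} (w1 w2 m1 m2 c : ℝ)
    (e1 : x.1 - y.1 = w1 ∨ x.1 - y.1 = -w1) (e2 : x.2 - y.2 = w2 ∨ x.2 - y.2 = -w2)
    (hw10 : 0 ≤ w1) (hw11 : w1 ≤ 1) (hw20 : 0 ≤ w2) (hw21 : w2 ≤ 1)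
    (h11 : m1 ≤ w1 ^ 2) (h12 : m1 ≤ (1 - w1) ^ 2)
    (h21 : m2 ≤ w2 ^ 2) (h22 : m2 ≤ (1 - w2) ^ 2)
    (hc : 0 ≤ c) (hcm : c ^ 2 ≤ m1 + m2) : c ≤ torusDist x y := by
  apply le_torusDist hc
  intro a b
  have hb1 : m1 ≤ (x.1 - y.1 + a) ^ 2 := by
    rcases e1 with e | e <;> rw [e]
    · exact int_shift hw10 hw11 a h11 h12
    · exact int_shift' hw10 hw11 a h11 h12
  have hb2 : m2 ≤ (x.2 - y.2 + b) ^ 2 := by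
    rcases e2 with e | e <;> rw [e]
    · exact int_shift hw20 hw21 b h21 h22
    · exact int_shift' hw20 hw21 b h21 h22
  linarith

lemma term_le {d c : ℝ} (p : ℝ) (hp : 0 < p) (hc : 0 < c) (h : c ≤ d) :
    1 / d ^ p ≤ (1 / c) ^ p := by
  have h1 : 0 < c ^ p := Real.rpow_pos_of_pos hc p
  have h2 : c ^ p ≤ d ^ p := Real.rpow_le_rpow hc.le h hp.le
  calc 1 / d ^ p ≤ 1 / c ^ p := one_div_le_one_div_of_le h1 h2
  _ = (1 / c) ^ p := by rw [one_div, one_div, ← Real.inv_rpow hc.le]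

noncomputable def cfg (t : ℝ) : Fin 4 → ℝ × ℝ :=
  ![((0:ℝ),(0:ℝ)), (t/2, 1/2), (1/2, t/2), ((1+t)/2, (1+t)/2)]

set_option maxHeartbeats 1000000 in
lemma cfg_lb (t : ℝ) (ht0 : 0 ≤ t) (ht1 : t ≤ 1/2) :
    (Real.sqrt (1 + t^2) / 2 ≤ torusDist (cfg t 0) (cfg t 1)) ∧
    (Real.sqrt (1 + t^2) / 2 ≤ torusDist (cfg t 0) (cfg t 2)) ∧
    ((1 - t) / Real.sqrt 2 ≤ torusDist (cfg t 0) (cfg t 3)) ∧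
    ((1 - t) / Real.sqrt 2 ≤ torusDist (cfg t 1) (cfg t 2)) ∧
    (Real.sqrt (1 + t^2) / 2 ≤ torusDist (cfg t 1) (cfg t 3)) ∧
    (Real.sqrt (1 + t^2) / 2 ≤ torusDist (cfg t 2) (cfg t 3)) := by
  set x : Fin 4 → ℝ × ℝ := cfg t with hx
  have hs2 : Real.sqrt 2 ^ 2 = 2 := Real.sq_sqrt (by norm_num)
  have hs2' : (0:ℝ) < Real.sqrt 2 := Real.sqrt_pos.2 (by norm_num)
  have hc1 : (0:ℝ) < Real.sqrt (1 + t^2) / 2 := by positivity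
  have hc2 : (0:ℝ) < (1 - t) / Real.sqrt 2 := by
    apply div_pos (by linarith) hs2'
  have hc1sq : (Real.sqrt (1 + t^2) / 2) ^ 2 = t^2/4 + 1/4 := by
    rw [div_pow, Real.sq_sqrt (by positivity)]; ring
  have hc2sq : ((1 - t) / Real.sqrt 2) ^ 2 = (1-t)^2 / 2 := by
    rw [div_pow, hs2]
  have hx0 : x 0 = ((0:ℝ), (0:ℝ)) := rfl
  have hx1 : x 1 = (t/2, 1/2) := rfl
  have hx2 : x 2 = (1/2, t/2) := rfl
  have hx3 : x 3 = ((1+t)/2, (1+t)/2) := rfl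
  -- six lower bounds
  have d01 : Real.sqrt (1 + t^2) / 2 ≤ torusDist (x 0) (x 1) := by
    apply le_torusDist_of (t/2) (1/2) (t^2/4) (1/4) _
      (Or.inr (by rw [hx0, hx1]; ring)) (Or.inr (by rw [hx0, hx1]; ring))
      (by linarith) (by linarith) (by norm_num) (by norm_num)
      (le_of_eq (by ring)) (by nlinarith) (by norm_num) (by norm_num) hc1.le
      (le_of_eq (by rw [hc1sq]))
  have d02 : Real.sqrt (1 + t^2) / 2 ≤ torusDist (x 0) (x 2) := by
    apply le_torusDist_of (1/2) (t/2) (1/4) (t^2/4) _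
      (Or.inr (by rw [hx0, hx2]; ring)) (Or.inr (by rw [hx0, hx2]; ring))
      (by norm_num) (by norm_num) (by linarith) (by linarith)
      (by norm_num) (by norm_num) (le_of_eq (by ring)) (by nlinarith) hc1.le
      (le_of_eq (by rw [hc1sq]; ring))
  have d03 : (1 - t) / Real.sqrt 2 ≤ torusDist (x 0) (x 3) := by
    apply le_torusDist_of ((1+t)/2) ((1+t)/2) (((1-t)/2)^2) (((1-t)/2)^2) _
      (Or.inr (by rw [hx0, hx3]; ring)) (Or.inr (by rw [hx0, hx3]; ring))
      (by linarith) (by linarith) (by linarith) (by linarith)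
      (by nlinarith) (by nlinarith) (by nlinarith) (by nlinarith) hc2.le
      (le_of_eq (by rw [hc2sq]; ring))
  have d12 : (1 - t) / Real.sqrt 2 ≤ torusDist (x 1) (x 2) := by
    apply le_torusDist_of ((1-t)/2) ((1-t)/2) (((1-t)/2)^2) (((1-t)/2)^2) _
      (Or.inr (by rw [hx1, hx2]; ring)) (Or.inl (by rw [hx1, hx2]; ring))
      (by linarith) (by linarith) (by linarith) (by linarith)
      (by nlinarith) (by nlinarith) (by nlinarith) (by nlinarith) hc2.le
      (le_of_eq (by rw [hc2sq]; ring))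
  have d13 : Real.sqrt (1 + t^2) / 2 ≤ torusDist (x 1) (x 3) := by
    apply le_torusDist_of (1/2) (t/2) (1/4) (t^2/4) _
      (Or.inr (by rw [hx1, hx3]; ring)) (Or.inr (by rw [hx1, hx3]; ring))
      (by norm_num) (by norm_num) (by linarith) (by linarith)
      (by norm_num) (by norm_num) (le_of_eq (by ring)) (by nlinarith) hc1.le
      (le_of_eq (by rw [hc1sq]; ring))
  have d23 : Real.sqrt (1 + t^2) / 2 ≤ torusDist (x 2) (x 3) := by
    apply le_torusDist_of (t/2) (1/2) (t^2/4) (1/4) _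
      (Or.inr (by rw [hx2, hx3]; ring)) (Or.inr (by rw [hx2, hx3]; ring))
      (by linarith) (by linarith) (by norm_num) (by norm_num)
      (le_of_eq (by ring)) (by nlinarith) (by norm_num) (by norm_num) hc1.le
      (le_of_eq (by rw [hc1sq]))
  exact ⟨d01, d02, d03, d12, d13, d23⟩

lemma cfg_energy_le (p t : ℝ) (hp : 0 < p) (ht0 : 0 ≤ t) (ht1 : t ≤ 1/2) :
    rieszEnergy4 p (cfg t) ≤
      4 * (2 / Real.sqrt (1 + t^2)) ^ p + 2 * (Real.sqrt 2 / (1 - t)) ^ p := by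
  obtain ⟨d01, d02, d03, d12, d13, d23⟩ := cfg_lb t ht0 ht1
  have hs2' : (0:ℝ) < Real.sqrt 2 := Real.sqrt_pos.2 (by norm_num)
  have hc1 : (0:ℝ) < Real.sqrt (1 + t^2) / 2 := by positivity
  have hc2 : (0:ℝ) < (1 - t) / Real.sqrt 2 := div_pos (by linarith) hs2'
  rw [rieszEnergy4_eq]
  have e1 : 1 / (Real.sqrt (1 + t^2) / 2) = 2 / Real.sqrt (1 + t^2) := one_div_div _ _
  have e2 : 1 / ((1 - t) / Real.sqrt 2) = Real.sqrt 2 / (1 - t) := one_div_div _ _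
  have b01 := term_le p hp hc1 d01
  have b02 := term_le p hp hc1 d02
  have b03 := term_le p hp hc2 d03
  have b12 := term_le p hp hc2 d12
  have b13 := term_le p hp hc1 d13
  have b23 := term_le p hp hc1 d23
  rw [e1] at b01 b02 b13 b23
  rw [e2] at b03 b12
  linarith

set_option maxHeartbeats 1000000 in
lemma rieszEnergy4_Send (p : ℝ) (hp : 0 < p) :
    rieszEnergy4 p Send = 6 * (2 / (Real.sqrt 6 - Real.sqrt 2)) ^ p := by
  have h2 : Real.sqrt 2 ^ 2 = 2 := Real.sq_sqrt (by norm_num)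
  have h3 : Real.sqrt 3 ^ 2 = 3 := Real.sq_sqrt (by norm_num)
  have h2' : (0:ℝ) < Real.sqrt 2 := Real.sqrt_pos.2 (by norm_num)
  have h3' : (0:ℝ) < Real.sqrt 3 := Real.sqrt_pos.2 (by norm_num)
  have h3lt : Real.sqrt 3 < 2 := by nlinarith
  have h3gt : (3:ℝ)/2 < Real.sqrt 3 := by nlinarith
  set t : ℝ := 2 - Real.sqrt 3 with htdef
  have hSend : Send = cfg t := by
    funext i
    fin_cases i <;> simp [Send, cfg, htdef] <;> norm_num <;> ring
  set d : ℝ := (Real.sqrt 6 - Real.sqrt 2) / 2 with hddef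
  have hd : 0 < d := by
    rw [hddef, sqrt6_eq]; nlinarith
  have hdsq : d ^ 2 = 2 - Real.sqrt 3 := by
    rw [hddef, sqrt6_eq]
    have e : ((Real.sqrt 2 * Real.sqrt 3 - Real.sqrt 2)/2)^2 =
        (Real.sqrt 2^2 * Real.sqrt 3^2 - 2*Real.sqrt 2^2*Real.sqrt 3 + Real.sqrt 2^2)/4 := by
      ring
    rw [e, h2, h3]; ring
  have ht0 : 0 ≤ t := by rw [htdef]; linarith
  have ht1 : t ≤ 1/2 := by rw [htdef]; linarith
  -- lower bounds specialize to d
  have hc1d : Real.sqrt (1 + t^2) / 2 = d := by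
    have e : 1 + t^2 = (2*d)^2 := by
      rw [htdef]; nlinarith [hdsq]
    rw [e, Real.sqrt_sq (by linarith)]; ring
  have hc2d : (1 - t) / Real.sqrt 2 = d := by
    rw [div_eq_iff h2'.ne', htdef, hddef, sqrt6_eq]
    linear_combination ((1 - Real.sqrt 3)/2) * h2
  obtain ⟨d01, d02, d03, d12, d13, d23⟩ := cfg_lb t ht0 ht1
  rw [hc1d] at d01 d02 d13 d23
  rw [hc2d] at d03 d12
  -- upper bounds
  have u01 : torusDist (cfg t 0) (cfg t 1) ≤ d := by
    refine le_trans (torusDist_le _ _ 0 0) (le_of_eq ?_)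
    rw [show ((cfg t 0).1 - (cfg t 1).1 + ((0:ℤ):ℝ))^2 + ((cfg t 0).2 - (cfg t 1).2 + ((0:ℤ):ℝ))^2 = d^2 by
      show ((0:ℝ) - t/2 + ((0:ℤ):ℝ))^2 + ((0:ℝ) - 1/2 + ((0:ℤ):ℝ))^2 = d^2
      push_cast; rw [hdsq, htdef]; linear_combination (1/4) * h3]
    exact Real.sqrt_sq hd.le
  have u02 : torusDist (cfg t 0) (cfg t 2) ≤ d := by
    refine le_trans (torusDist_le _ _ 0 0) (le_of_eq ?_)
    rw [show ((cfg t 0).1 - (cfg t 2).1 + ((0:ℤ):ℝ))^2 + ((cfg t 0).2 - (cfg t 2).2 + ((0:ℤ):ℝ))^2 = d^2 by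
      show ((0:ℝ) - 1/2 + ((0:ℤ):ℝ))^2 + ((0:ℝ) - t/2 + ((0:ℤ):ℝ))^2 = d^2
      push_cast; rw [hdsq, htdef]; linear_combination (1/4) * h3]
    exact Real.sqrt_sq hd.le
  have u03 : torusDist (cfg t 0) (cfg t 3) ≤ d := by
    refine le_trans (torusDist_le _ _ 1 1) (le_of_eq ?_)
    rw [show ((cfg t 0).1 - (cfg t 3).1 + ((1:ℤ):ℝ))^2 + ((cfg t 0).2 - (cfg t 3).2 + ((1:ℤ):ℝ))^2 = d^2 by
      show ((0:ℝ) - (1+t)/2 + ((1:ℤ):ℝ))^2 + ((0:ℝ) - (1+t)/2 + ((1:ℤ):ℝ))^2 = d^2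
      push_cast; rw [hdsq, htdef]; linear_combination (1/2) * h3]
    exact Real.sqrt_sq hd.le
  have u12 : torusDist (cfg t 1) (cfg t 2) ≤ d := by
    refine le_trans (torusDist_le _ _ 0 0) (le_of_eq ?_)
    rw [show ((cfg t 1).1 - (cfg t 2).1 + ((0:ℤ):ℝ))^2 + ((cfg t 1).2 - (cfg t 2).2 + ((0:ℤ):ℝ))^2 = d^2 by
      show (t/2 - 1/2 + ((0:ℤ):ℝ))^2 + ((1:ℝ)/2 - t/2 + ((0:ℤ):ℝ))^2 = d^2
      push_cast; rw [hdsq, htdef]; linear_combination (1/2) * h3]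
    exact Real.sqrt_sq hd.le
  have u13 : torusDist (cfg t 1) (cfg t 3) ≤ d := by
    refine le_trans (torusDist_le _ _ 0 0) (le_of_eq ?_)
    rw [show ((cfg t 1).1 - (cfg t 3).1 + ((0:ℤ):ℝ))^2 + ((cfg t 1).2 - (cfg t 3).2 + ((0:ℤ):ℝ))^2 = d^2 by
      show (t/2 - (1+t)/2 + ((0:ℤ):ℝ))^2 + ((1:ℝ)/2 - (1+t)/2 + ((0:ℤ):ℝ))^2 = d^2
      push_cast; rw [hdsq, htdef]; linear_combination (1/4) * h3]
    exact Real.sqrt_sq hd.le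
  have u23 : torusDist (cfg t 2) (cfg t 3) ≤ d := by
    refine le_trans (torusDist_le _ _ 0 0) (le_of_eq ?_)
    rw [show ((cfg t 2).1 - (cfg t 3).1 + ((0:ℤ):ℝ))^2 + ((cfg t 2).2 - (cfg t 3).2 + ((0:ℤ):ℝ))^2 = d^2 by
      show ((1:ℝ)/2 - (1+t)/2 + ((0:ℤ):ℝ))^2 + (t/2 - (1+t)/2 + ((0:ℤ):ℝ))^2 = d^2
      push_cast; rw [hdsq, htdef]; linear_combination (1/4) * h3]
    exact Real.sqrt_sq hd.le
  rw [hSend, rieszEnergy4_eq]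
  rw [le_antisymm u01 d01, le_antisymm u02 d02, le_antisymm u03 d03,
    le_antisymm u12 d12, le_antisymm u13 d13, le_antisymm u23 d23]
  have e : 1 / d ^ p = (2 / (Real.sqrt 6 - Real.sqrt 2)) ^ p := by
    rw [one_div, ← Real.inv_rpow hd.le, hddef, ← one_div, one_div_div]
  rw [e]; ring

/-- For every `p > 0`, the energy `E(α)` is strictly below
`E(π/12) = 6·(2/(√6-√2))^p` for all `α < π/12` close enough to `π/12`;
consequently `S_{π/12}` is never a minimizer of the Riesz `p`-energy among
four-point configurations on the torus. -/
theorem S_end_not_minimizer (p : ℝ) (hp : 0 < p) :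
    (∃ ε > 0, ∀ α : ℝ, Real.pi / 12 - ε < α → α < Real.pi / 12 →
      Efam p α < 6 * (2 / (Real.sqrt 6 - Real.sqrt 2)) ^ p) ∧
    ∃ x : Fin 4 → ℝ × ℝ, rieszEnergy4 p x < rieszEnergy4 p Send := by
  obtain ⟨ε, hε, h1⟩ := part1 p hp
  refine ⟨⟨ε, hε, h1⟩, ?_⟩
  have hpi : 0 < Real.pi / 12 := by positivity
  set m : ℝ := min ε (Real.pi / 12) with hm
  have hm0 : 0 < m := lt_min hε hpi
  have hmε : m ≤ ε := min_le_left _ _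
  have hmπ : m ≤ Real.pi / 12 := min_le_right _ _
  set α : ℝ := Real.pi / 12 - m / 2 with hα
  have hα0 : 0 < α := by rw [hα]; linarith
  have hα2 : α < Real.pi / 12 := by rw [hα]; linarith
  have hα1 : Real.pi / 12 - ε < α := by rw [hα]; linarith
  have hαhalf : α < Real.pi / 2 := by
    have : Real.pi / 12 < Real.pi / 2 := by linarith [Real.pi_pos]
    linarith
  have hcosα : 0 < Real.cos α := Real.cos_pos_of_mem_Ioo ⟨by linarith [Real.pi_pos], hαhalf⟩
  set t : ℝ := Real.tan α with htdef
  have h3sq : Real.sqrt 3 ^ 2 = 3 := Real.sq_sqrt (by norm_num)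
  have h3' : (0:ℝ) < Real.sqrt 3 := Real.sqrt_pos.2 (by norm_num)
  have ht0 : 0 ≤ t := (Real.tan_pos_of_pos_of_lt_pi_div_two hα0 hαhalf).le
  have ht1 : t ≤ 1/2 := by
    have h12 : Real.pi / 12 < Real.pi / 2 := by linarith [Real.pi_pos]
    have hlt := Real.tan_lt_tan_of_nonneg_of_lt_pi_div_two hα0.le h12 hα2
    rw [tan_pi_div_twelve] at hlt
    have hlt' : t < 2 - Real.sqrt 3 := hlt
    nlinarith
  have hsq : Real.sqrt (1 + t ^ 2) = (Real.cos α)⁻¹ := by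
    rw [htdef, ← Real.inv_sqrt_one_add_tan_sq hcosα, inv_inv]
  have heq : 4 * (2 / Real.sqrt (1 + t ^ 2)) ^ p + 2 * (Real.sqrt 2 / (1 - t)) ^ p
      = Efam p α := by
    rw [Efam, ← hsq]
  refine ⟨cfg t, ?_⟩
  calc rieszEnergy4 p (cfg t)
      ≤ 4 * (2 / Real.sqrt (1 + t ^ 2)) ^ p + 2 * (Real.sqrt 2 / (1 - t)) ^ p :=
        cfg_energy_le p t hp ht0 ht1
    _ = Efam p α := heq
    _ < 6 * (2 / (Real.sqrt 6 - Real.sqrt 2)) ^ p := h1 α hα1 hα2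
    _ = rieszEnergy4 p Send := (rieszEnergy4_Send p hp).symm
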